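/- For any instance I over a relational schema, all cores of I are isomorphic: if I' and I'' are both cores of I (i.e., images of endomorphisms of I that admit no endomorphism onto a proper subinstance of themselves), then there is an isomorphism between I' and I''. -/
import Mathlib


/-! Common framework: instances, homomorphisms, tgds, chase variants. -/

inductive Val where
  | c : ℕ → Val
  | n : ℕ → Val
deriving DecidableEq

structure Atom (Rel : Type) where
  rel : Rel
  args : List Val

abbrev Inst (Rel : Type) := Set (Atom Rel)

def mapAtom {Rel : Type} (h : Val → Val) (a : Atom Rel) : Atom Rel :=
  ⟨a.rel, a.args.map h⟩

/-- Homomorphisms fix constants. -/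
def ConstFix (h : Val → Val) : Prop := ∀ k, h (Val.c k) = Val.c k

def IsHom {Rel : Type} (h : Val → Val) (I J : Inst Rel) : Prop :=
  ConstFix h ∧ ∀ a ∈ I, mapAtom h a ∈ J

def domI {Rel : Type} (I : Inst Rel) : Set Val :=
  {v | ∃ a ∈ I, v ∈ a.args}

/-- Terms in dependencies: `inl v` is variable `v`, `inr k` is constant `k`. -/
abbrev Tm := ℕ ⊕ ℕ

structure TAtom (Rel : Type) where
  rel : Rel
  args : List Tm

def TAtom.vars {Rel : Type} (a : TAtom Rel) : Set ℕ := {v | Sum.inl v ∈ a.args}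

def varsOf {Rel : Type} (S : Set (TAtom Rel)) : Set ℕ := ⋃ a ∈ S, a.vars

/-- A tuple-generating dependency: body → ∃ z̄ head; the existential
variables are exactly the head variables not occurring in the body. -/
structure TGD (Rel : Type) where
  body : Set (TAtom Rel)
  head : Set (TAtom Rel)

def applyT (g : ℕ → Val) : Tm → Val
  | Sum.inl v => g v
  | Sum.inr k => Val.c k

def applyA {Rel : Type} (g : ℕ → Val) (a : TAtom Rel) : Atom Rel :=
  ⟨a.rel, a.args.map (applyT g)⟩

def instT {Rel : Type} (g : ℕ → Val) (S : Set (TAtom Rel)) : Inst Rel :=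
  (applyA g) '' S

def frontierV {Rel : Type} (ξ : TGD Rel) : Set ℕ := varsOf ξ.body ∩ varsOf ξ.head

def evars {Rel : Type} (ξ : TGD Rel) : Set ℕ := varsOf ξ.head \ varsOf ξ.body

def EqOnBody {Rel : Type} (ξ : TGD Rel) (g g' : ℕ → Val) : Prop :=
  ∀ v ∈ varsOf ξ.body, g v = g' v

def EqOnFrontier {Rel : Type} (ξ : TGD Rel) (g g' : ℕ → Val) : Prop :=
  ∀ v ∈ frontierV ξ, g v = g' v

/-- `(ξ, g)` is a trigger on `I`. -/
def IsTrigger {Rel : Type} (ξ : TGD Rel) (g : ℕ → Val) (I : Inst Rel) : Prop :=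
  instT g ξ.body ⊆ I

/-- `(ξ, g)` is an active trigger on `I`. -/
def Active {Rel : Type} (ξ : TGD Rel) (g : ℕ → Val) (I : Inst Rel) : Prop :=
  IsTrigger ξ g I ∧ ¬ ∃ g', EqOnBody ξ g g' ∧ instT g' ξ.head ⊆ I

/-- `I` satisfies the tgd `ξ`. -/
def Sat {Rel : Type} (I : Inst Rel) (ξ : TGD Rel) : Prop := ∀ g, ¬ Active ξ g I

/-- `g'` extends `g` by assigning distinct fresh nulls to the existential
variables of `ξ`. -/
def FreshExt {Rel : Type} (I : Inst Rel) (ξ : TGD Rel) (g g' : ℕ → Val) : Prop :=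
  EqOnBody ξ g g' ∧
  (∀ v ∈ evars ξ, (∃ k, g' v = Val.n k) ∧ g' v ∉ domI I) ∧
  (∀ v ∈ evars ξ, ∀ w ∈ evars ξ, g' v = g' w → v = w)

def NoActive {Rel : Type} (D : Set (TGD Rel)) (I : Inst Rel) : Prop :=
  ∀ ξ ∈ D, ∀ g, ¬ Active ξ g I

/-- A standard-chase step. -/
def StdStep {Rel : Type} (D : Set (TGD Rel)) (I J : Inst Rel) : Prop :=
  ∃ ξ ∈ D, ∃ g g', Active ξ g I ∧ FreshExt I ξ g g' ∧ J = I ∪ instT g' ξ.head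

/-- A standard chase sequence (stuttering once no active trigger remains). -/
structure StdSeq {Rel : Type} (D : Set (TGD Rel)) (I : Inst Rel) where
  inst : ℕ → Inst Rel
  init : inst 0 = I
  step : ∀ i, StdStep D (inst i) (inst (i + 1)) ∨
    (NoActive D (inst i) ∧ inst (i + 1) = inst i)

def StdSeq.Terminates {Rel : Type} {D : Set (TGD Rel)} {I : Inst Rel}
    (s : StdSeq D I) : Prop :=
  ∃ i, NoActive D (s.inst i)

/-- Fairness: every active trigger is eventually fired or deactivated. -/
def StdSeq.Fair {Rel : Type} {D : Set (TGD Rel)} {I : Inst Rel}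
    (s : StdSeq D I) : Prop :=
  ∀ i, ∀ ξ ∈ D, ∀ g, Active ξ g (s.inst i) → ∃ j, i ≤ j ∧ ¬ Active ξ g (s.inst j)

/-- An oblivious chase sequence: fires triggers (active or not), each
equivalence class (identified by the body variables) at most once. -/
structure OblSeq {Rel : Type} (D : Set (TGD Rel)) (I : Inst Rel) where
  inst : ℕ → Inst Rel
  fired : ℕ → Option (TGD Rel × (ℕ → Val))
  init : inst 0 = I
  step : ∀ i, (fired i).elim (inst (i + 1) = inst i)
    (fun p => p.1 ∈ D ∧ IsTrigger p.1 p.2 (inst i) ∧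
      ∃ g', FreshExt (inst i) p.1 p.2 g' ∧ inst (i + 1) = inst i ∪ instT g' p.1.head)
  once : ∀ i j ξ g g', fired i = some (ξ, g) → fired j = some (ξ, g') →
    EqOnBody ξ g g' → i = j

def OblSeq.Fires {Rel : Type} {D : Set (TGD Rel)} {I : Inst Rel}
    (s : OblSeq D I) (ξ : TGD Rel) (g : ℕ → Val) : Prop :=
  ∃ j g₀, s.fired j = some (ξ, g₀) ∧ EqOnBody ξ g₀ g

/-- The oblivious chase terminates: only finitely many firings occur. -/
def OblSeq.Terminates {Rel : Type} {D : Set (TGD Rel)} {I : Inst Rel}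
    (s : OblSeq D I) : Prop :=
  ∃ i, ∀ j, i ≤ j → s.fired j = none

/-- Fairness: every applicable trigger is eventually fired. -/
def OblSeq.Fair {Rel : Type} {D : Set (TGD Rel)} {I : Inst Rel}
    (s : OblSeq D I) : Prop :=
  ∀ i, ∀ ξ ∈ D, ∀ g, IsTrigger ξ g (s.inst i) → s.Fires ξ g

/-- A semi-oblivious chase sequence: like the oblivious one, but triggers are
identified when they agree on the frontierV variables. -/
structure SoblSeq {Rel : Type} (D : Set (TGD Rel)) (I : Inst Rel) where
  inst : ℕ → Inst Rel
  fired : ℕ → Option (TGD Rel × (ℕ → Val))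
  init : inst 0 = I
  step : ∀ i, (fired i).elim (inst (i + 1) = inst i)
    (fun p => p.1 ∈ D ∧ IsTrigger p.1 p.2 (inst i) ∧
      ∃ g', FreshExt (inst i) p.1 p.2 g' ∧ inst (i + 1) = inst i ∪ instT g' p.1.head)
  once : ∀ i j ξ g g', fired i = some (ξ, g) → fired j = some (ξ, g') →
    EqOnFrontier ξ g g' → i = j

def SoblSeq.Fires {Rel : Type} {D : Set (TGD Rel)} {I : Inst Rel}
    (s : SoblSeq D I) (ξ : TGD Rel) (g : ℕ → Val) : Prop :=
  ∃ j g₀, s.fired j = some (ξ, g₀) ∧ EqOnFrontier ξ g₀ g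

def SoblSeq.Terminates {Rel : Type} {D : Set (TGD Rel)} {I : Inst Rel}
    (s : SoblSeq D I) : Prop :=
  ∃ i, ∀ j, i ≤ j → s.fired j = none

def SoblSeq.Fair {Rel : Type} {D : Set (TGD Rel)} {I : Inst Rel}
    (s : SoblSeq D I) : Prop :=
  ∀ i, ∀ ξ ∈ D, ∀ g, IsTrigger ξ g (s.inst i) → s.Fires ξ g

/-- `C` is a core of `I`: a subinstance that is the image of an endomorphism
of `I` and admits no endomorphism onto a proper subinstance of itself. -/
def IsCore {Rel : Type} (I C : Inst Rel) : Prop :=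
  C ⊆ I ∧ (∃ h, IsHom h I I ∧ ∀ a ∈ I, mapAtom h a ∈ C) ∧
  ¬ ∃ g, IsHom g C C ∧ (mapAtom g '' C) ⊂ C

/-- `h` is an isomorphism from `I` to `J`: a bijective homomorphism whose
inverse is also a homomorphism. -/
def IsIso {Rel : Type} (h : Val → Val) (I J : Inst Rel) : Prop :=
  IsHom h I J ∧ mapAtom h '' I = J ∧
  ∃ h', IsHom h' J I ∧ mapAtom h' '' J = I ∧
    (∀ v ∈ domI I, h' (h v) = v) ∧ (∀ v ∈ domI J, h (h' v) = v)

section CoreHelpers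

variable {Rel : Type}

lemma mapAtom_comp' (f g : Val → Val) (a : Atom Rel) :
    mapAtom (f ∘ g) a = mapAtom f (mapAtom g a) := by
  simp [mapAtom]

lemma mapAtom_id' (a : Atom Rel) : mapAtom id a = a := by
  simp [mapAtom]

lemma domI_finite {J : Inst Rel} (h : J.Finite) : (domI J).Finite := by
  have hEq : domI J = ⋃ a ∈ J, {v | v ∈ a.args} := by
    ext v; simp [domI]
  rw [hEq]
  exact h.biUnion (fun a _ => a.args.finite_toSet)

lemma constFix_iter {f : Val → Val} (hf : ConstFix f) (n : ℕ) : ConstFix (f^[n]) := by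
  induction n with
  | zero => intro k; simp
  | succ n ih => intro k; rw [Function.iterate_succ_apply, hf k]; exact ih k

lemma iter_mem {f : Val → Val} {X : Inst Rel} (hX : ∀ a ∈ X, mapAtom f a ∈ X) :
    ∀ n, ∀ a ∈ X, mapAtom (f^[n]) a ∈ X := by
  intro n
  induction n with
  | zero => intro a ha; simpa [mapAtom_id'] using ha
  | succ n ih =>
    intro a ha
    have : mapAtom (f^[n+1]) a = mapAtom (f^[n]) (mapAtom f a) := by
      rw [← mapAtom_comp', Function.iterate_succ]
    rw [this]
    exact ih _ (hX a ha)

lemma iter_image {f : Val → Val} {X : Inst Rel} (hX : mapAtom f '' X = X) :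
    ∀ n, mapAtom (f^[n]) '' X = X := by
  intro n
  induction n with
  | zero =>
    ext a; constructor
    · rintro ⟨b, hb, rfl⟩; simpa [mapAtom_id'] using hb
    · intro ha; exact ⟨a, ha, by simp [mapAtom_id']⟩
  | succ n ih =>
    have h1 : mapAtom (f^[n+1]) '' X = mapAtom (f^[n]) '' (mapAtom f '' X) := by
      rw [← Set.image_comp]
      apply Set.image_congr'
      intro a
      show mapAtom (f^[n+1]) a = mapAtom (f^[n]) (mapAtom f a)
      rw [← mapAtom_comp', Function.iterate_succ]
    rw [h1, hX, ih]

lemma iter_fix {f : Val → Val} {S : Set Val} {N : ℕ}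
    (h : ∀ v ∈ S, f^[N] v = v) (k : ℕ) : ∀ v ∈ S, f^[N * k] v = v := by
  induction k with
  | zero => intro v _; simp
  | succ k ih =>
    intro v hv
    rw [Nat.mul_succ, Function.iterate_add_apply, h v hv]
    exact ih v hv

lemma exists_iter_id {S : Set Val} (hS : S.Finite) {f : Val → Val}
    (hmem : ∀ v ∈ S, f v ∈ S) (hsurj : ∀ v ∈ S, ∃ w ∈ S, f w = v) :
    ∃ N, 1 ≤ N ∧ ∀ v ∈ S, f^[N] v = v := by
  haveI := hS.to_subtype
  let F : S → S := fun x => ⟨f x, hmem x x.2⟩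
  have Fsurj : Function.Surjective F := by
    rintro ⟨v, hv⟩
    obtain ⟨w, hw, hfw⟩ := hsurj v hv
    exact ⟨⟨w, hw⟩, Subtype.ext hfw⟩
  have Finj : Function.Injective F := Finite.injective_iff_surjective.mpr Fsurj
  have main : ∀ n (x : S), (F^[n] x : Val) = f^[n] (x : Val) := by
    intro n
    induction n with
    | zero => intro x; simp
    | succ n ih =>
      intro x
      rw [Function.iterate_succ_apply, Function.iterate_succ_apply]
      exact ih (F x)
  obtain ⟨i, j, hne, heq⟩ := Finite.exists_ne_map_eq_of_infinite (fun n : ℕ => F^[n])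
  rcases Nat.lt_or_ge i j with hij | hij
  ·
    refine ⟨j - i, by omega, ?_⟩
    have key : F^[j - i] = id := by
      have hji : i + (j - i) = j := by omega
      have hcomp : F^[i] ∘ F^[j - i] = F^[i] := by
        rw [← Function.iterate_add, hji]
        exact heq.symm
      funext x
      exact (Finj.iterate i) (congrFun hcomp x)
    intro v hv
    have := main (j - i) ⟨v, hv⟩
    rw [key] at this
    exact this.symm
  · have hlt : j < i := Nat.lt_of_le_of_ne hij (fun e => hne e.symm)
    refine ⟨i - j, by omega, ?_⟩
    have key : F^[i - j] = id := by
      have hji : j + (i - j) = i := by omega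
      have hcomp : F^[j] ∘ F^[i - j] = F^[j] := by
        rw [← Function.iterate_add, hji]
        exact heq
      funext x
      exact (Finj.iterate j) (congrFun hcomp x)
    intro v hv
    have := main (i - j) ⟨v, hv⟩
    rw [key] at this
    exact this.symm

end CoreHelpers

/-- All cores of a (finite) instance are isomorphic. -/
theorem stmt1 {Rel : Type} (I C₁ C₂ : Inst Rel) (hfin : I.Finite)
    (h1 : IsCore I C₁) (h2 : IsCore I C₂) : ∃ h, IsIso h C₁ C₂ := by
  obtain ⟨hsub1, ⟨g, ghom, gimg⟩, hmin1⟩ := h1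
  obtain ⟨hsub2, ⟨h, hhom, himg⟩, hmin2⟩ := h2
  -- g maps I into C₁, h maps I into C₂
  set φ : Val → Val := g ∘ h with hφ
  set ψ : Val → Val := h ∘ g with hψ
  have φfix : ConstFix φ := fun k => by
    show g (h (Val.c k)) = Val.c k
    rw [hhom.1 k, ghom.1 k]
  have ψfix : ConstFix ψ := fun k => by
    show h (g (Val.c k)) = Val.c k
    rw [ghom.1 k, hhom.1 k]
  have φmem : ∀ a ∈ C₁, mapAtom φ a ∈ C₁ := by
    intro a ha
    rw [hφ, mapAtom_comp']
    exact gimg _ (hsub2 (himg a (hsub1 ha)))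
  have ψmem : ∀ a ∈ C₂, mapAtom ψ a ∈ C₂ := by
    intro a ha
    rw [hψ, mapAtom_comp']
    exact himg _ (hsub1 (gimg a (hsub2 ha)))
  -- surjectivity on atoms, by minimality of cores
  have φsurjA : mapAtom φ '' C₁ = C₁ := by
    have hss : mapAtom φ '' C₁ ⊆ C₁ := by
      rintro _ ⟨a, ha, rfl⟩; exact φmem a ha
    by_contra hne
    exact hmin1 ⟨φ, ⟨φfix, φmem⟩, Set.ssubset_iff_subset_ne.mpr ⟨hss, hne⟩⟩
  have ψsurjA : mapAtom ψ '' C₂ = C₂ := by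
    have hss : mapAtom ψ '' C₂ ⊆ C₂ := by
      rintro _ ⟨a, ha, rfl⟩; exact ψmem a ha
    by_contra hne
    exact hmin2 ⟨ψ, ⟨ψfix, ψmem⟩, Set.ssubset_iff_subset_ne.mpr ⟨hss, hne⟩⟩
  -- value-level maps
  have φval : ∀ v ∈ domI C₁, φ v ∈ domI C₁ := by
    rintro v ⟨a, ha, hv⟩
    exact ⟨mapAtom φ a, φmem a ha, List.mem_map.mpr ⟨v, hv, rfl⟩⟩
  have ψval : ∀ v ∈ domI C₂, ψ v ∈ domI C₂ := by
    rintro v ⟨a, ha, hv⟩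
    exact ⟨mapAtom ψ a, ψmem a ha, List.mem_map.mpr ⟨v, hv, rfl⟩⟩
  have φvsurj : ∀ v ∈ domI C₁, ∃ w ∈ domI C₁, φ w = v := by
    rintro v ⟨a, ha, hv⟩
    rw [← φsurjA] at ha
    obtain ⟨b, hb, rfl⟩ := ha
    obtain ⟨w, hw, rfl⟩ := List.mem_map.mp hv
    exact ⟨w, ⟨b, hb, hw⟩, rfl⟩
  have ψvsurj : ∀ v ∈ domI C₂, ∃ w ∈ domI C₂, ψ w = v := by
    rintro v ⟨a, ha, hv⟩
    rw [← ψsurjA] at ha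
    obtain ⟨b, hb, rfl⟩ := ha
    obtain ⟨w, hw, rfl⟩ := List.mem_map.mp hv
    exact ⟨w, ⟨b, hb, hw⟩, rfl⟩
  -- finiteness of the domains
  have fin1 : (domI C₁).Finite :=
    (domI_finite hfin).subset (by rintro v ⟨a, ha, hv⟩; exact ⟨a, hsub1 ha, hv⟩)
  have fin2 : (domI C₂).Finite :=
    (domI_finite hfin).subset (by rintro v ⟨a, ha, hv⟩; exact ⟨a, hsub2 ha, hv⟩)
  obtain ⟨N₁, hN₁, hfix1⟩ := exists_iter_id fin1 φval φvsurj
  obtain ⟨N₂, hN₂, hfix2⟩ := exists_iter_id fin2 ψval ψvsurj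
  set N : ℕ := N₁ * N₂ with hN
  have hN1 : 1 ≤ N := Nat.one_le_iff_ne_zero.mpr (by positivity)
  have φfixN : ∀ v ∈ domI C₁, φ^[N] v = v := iter_fix hfix1 N₂
  have ψfixN : ∀ v ∈ domI C₂, ψ^[N] v = v := by
    intro v hv
    rw [hN, Nat.mul_comm]
    exact iter_fix hfix2 N₁ v hv
  -- semiconjugacy: h ∘ φ^[k] = ψ^[k] ∘ h
  have semi : ∀ k x, h (φ^[k] x) = ψ^[k] (h x) := by
    intro k
    have hs : Function.Semiconj h φ ψ := fun x => rfl
    exact hs.iterate_right k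
  obtain ⟨M, hM⟩ : ∃ M, N = M + 1 := ⟨N - 1, by omega⟩
  set h' : Val → Val := φ^[M] ∘ g with hh'
  -- pointwise identities
  have hcomp1 : ∀ x, h' (h x) = φ^[N] x := by
    intro x
    show φ^[M] (g (h x)) = φ^[N] x
    rw [hM, Function.iterate_succ_apply]
    rfl
  have hcomp2 : ∀ x, h (h' x) = ψ^[N] x := by
    intro x
    show h (φ^[M] (g x)) = ψ^[N] x
    rw [semi, hM, Function.iterate_succ_apply]
    rfl
  -- homomorphism facts
  have hmemC : ∀ a ∈ C₁, mapAtom h a ∈ C₂ := fun a ha => himg a (hsub1 ha)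
  have h'memC : ∀ a ∈ C₂, mapAtom h' a ∈ C₁ := by
    intro a ha
    rw [hh', mapAtom_comp']
    exact iter_mem φmem M _ (gimg a (hsub2 ha))
  have h'fix : ConstFix h' := fun k => by
    show φ^[M] (g (Val.c k)) = Val.c k
    rw [ghom.1 k]
    exact constFix_iter φfix M k
  -- image equalities
  have himgEq : mapAtom h '' C₁ = C₂ := by
    apply Set.eq_of_subset_of_subset
    · rintro _ ⟨a, ha, rfl⟩; exact hmemC a ha
    · intro b hb
      have : b ∈ mapAtom (ψ^[N]) '' C₂ := by rw [iter_image ψsurjA N]; exact hb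
      obtain ⟨c, hc, rfl⟩ := this
      refine ⟨mapAtom h' c, h'memC c hc, ?_⟩
      rw [← mapAtom_comp']
      have : h ∘ h' = ψ^[N] := funext hcomp2
      rw [this]
  have h'imgEq : mapAtom h' '' C₂ = C₁ := by
    apply Set.eq_of_subset_of_subset
    · rintro _ ⟨a, ha, rfl⟩; exact h'memC a ha
    · intro b hb
      have : b ∈ mapAtom (φ^[N]) '' C₁ := by rw [iter_image φsurjA N]; exact hb
      obtain ⟨c, hc, rfl⟩ := this
      refine ⟨mapAtom h c, hmemC c hc, ?_⟩
      rw [← mapAtom_comp']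
      have : h' ∘ h = φ^[N] := funext hcomp1
      rw [this]
  refine ⟨h, ⟨hhom.1, hmemC⟩, himgEq, h', ⟨h'fix, h'memC⟩, h'imgEq, ?_, ?_⟩
  · intro v hv
    rw [hcomp1]
    exact φfixN v hv
  · intro v hv
    rw [hcomp2]
    exact ψfixN v hv
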